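/- Let n be a nonnegative integer and let a, b, c be complex numbers with (a)_n ≠ 0, (1+a−c)_n ≠ 0, (c)_n ≠ 0, and (1+b−c−n)_{2n} ≠ 0. Then _4F_3(−n, a/2, (a+1)/2, b ; a, 1+a−c, c ; 4) = [(c−b)_n / (c)_n] · _4F_3(−n, 1−c−n, b, 1+b−c ; 1+a−c, (1+b−c−n)/2, (2+b−c−n)/2 ; 1/4), both sides being finite sums over k from 0 to n. -/

import Mathlib

open Finset

/-!
Duplication turns `(a/2)_k ((a+1)/2)_k 4^k` into `(a)_k (a+k)_k`, and Vandermonde's convolution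
expands `(a+k)_k / (1+a-c)_k` as `∑_m (k choose m) (c+k-m)_m / (1+a-c)_m`. After exchanging the
two sums, the inner sum over `k` is a Chu–Vandermonde sum, equal to
`(-n)_m (b)_m / m! · (c-b-m)_{n-m} / (c)_{n-m}`, and reflection `(x)_m = (-1)^m (1-x-m)_m`
together with duplication for `(1+b-c-n)_{2m}` turns this into the `m`-th term of the right side.
-/

/-- The rising factorial (Pochhammer symbol) `(a)_k = a(a+1)⋯(a+k-1)`. -/
noncomputable def poch (a : ℂ) (k : ℕ) : ℂ := ∏ i ∈ Finset.range k, (a + i)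

open Polynomial

lemma poch_eq_ascPochhammer_eval (a : ℂ) (k : ℕ) : poch a k = (ascPochhammer ℂ k).eval a := by
  induction k with
  | zero => simp [poch]
  | succ k ih => rw [ascPochhammer_succ_eval, ← ih, poch, prod_range_succ, poch]

lemma poch_add (a : ℂ) (j k : ℕ) : poch a (j + k) = poch a j * poch (a + j) k := by
  simp only [poch, prod_range_add, Nat.cast_add, add_assoc]

lemma poch_succ (a : ℂ) (k : ℕ) : poch a (k + 1) = poch a k * (a + k) := by
  simp only [poch, prod_range_succ]

lemma poch_ne_zero_of_le {a : ℂ} {n k : ℕ} (h : poch a n ≠ 0) (hk : k ≤ n) :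
    poch a k ≠ 0 := by
  obtain ⟨j, rfl⟩ := Nat.exists_eq_add_of_le hk
  exact left_ne_zero_of_mul (poch_add a k j ▸ h)

lemma poch_duplication (a : ℂ) (k : ℕ) :
    poch (a / 2) k * poch ((a + 1) / 2) k * 4 ^ k = poch a (2 * k) := by
  induction k with
  | zero => simp [poch]
  | succ k ih =>
    rw [show 2 * (k + 1) = 2 * k + 1 + 1 by ring, poch_succ, poch_succ, poch_succ, poch_succ,
      ← ih]
    push_cast
    ring

lemma descPochhammer_smeval_eq_poch (r : ℂ) (k : ℕ) :
    (descPochhammer ℤ k).smeval r = poch (r - k + 1) k := by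
  rw [descPochhammer_smeval_eq_ascPochhammer, ascPochhammer_smeval_eq_eval,
    poch_eq_ascPochhammer_eval]

lemma poch_neg_sub_add_one (y : ℂ) (k : ℕ) : poch (-y - k + 1) k = (-1) ^ k * poch y k := by
  rw [poch_eq_ascPochhammer_eval, poch_eq_ascPochhammer_eval,
    ← descPochhammer_eval_eq_ascPochhammer, ← neg_neg y,
    ascPochhammer_eval_neg_eq_descPochhammer, neg_neg, ← mul_assoc, ← mul_pow]
  simp

lemma poch_neg_natCast {N i : ℕ} : poch (-N) i = (-1) ^ i * N.choose i * i.factorial := by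
  rw [poch_eq_ascPochhammer_eval, ascPochhammer_eval_neg_eq_descPochhammer,
    descPochhammer_eval_eq_descFactorial, Nat.descFactorial_eq_factorial_mul_choose]
  push_cast; ring

lemma poch_sub_eq_sum (x y : ℂ) (k : ℕ) :
    poch (x - y) k =
      ∑ m ∈ range (k + 1), (-1) ^ m * k.choose m * poch y m * poch (x + m) (k - m) := by
  -- Vandermonde's convolution for descending factorials, at `-y` and `x + k - 1`
  have h := Ring.descPochhammer_smeval_add k (Commute.all (-y) (x + k - 1))
  rw [Nat.sum_antidiagonal_eq_sum_range_succ (fun i j => (k.choose i : ℂ) *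
    ((descPochhammer ℤ i).smeval (-y) * (descPochhammer ℤ j).smeval (x + k - 1)))] at h
  rw [descPochhammer_smeval_eq_poch, show -y + (x + k - 1) - k + 1 = x - y by ring] at h
  rw [h]
  refine sum_congr rfl fun m hm => ?_
  have hmk : m ≤ k := Nat.lt_succ_iff.mp (mem_range.mp hm)
  rw [descPochhammer_smeval_eq_poch, descPochhammer_smeval_eq_poch, poch_neg_sub_add_one,
    Nat.cast_sub hmk, show x + k - 1 - (k - m) + 1 = x + m by ring]
  ring

lemma chu_vandermonde (N : ℕ) (B C : ℂ) (hC : poch C N ≠ 0) :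
    ∑ i ∈ range (N + 1), poch (-N) i * poch B i / (i.factorial * poch C i) =
      poch (C - B) N / poch C N := by
  rw [poch_sub_eq_sum, sum_div]
  refine sum_congr rfl fun i hi => ?_
  have hiN : i ≤ N := Nat.lt_succ_iff.mp (mem_range.mp hi)
  have hsplit : poch C N = poch C i * poch (C + i) (N - i) := by
    rw [← poch_add, Nat.add_sub_cancel' hiN]
  rw [hsplit] at hC ⊢
  rw [poch_neg_natCast]
  field_simp [left_ne_zero_of_mul hC, right_ne_zero_of_mul hC, i.factorial_ne_zero]

lemma poch_add_div_poch (x y : ℂ) (k : ℕ) (hx : poch x k ≠ 0) :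
    poch (x + y) k / poch x k =
      ∑ m ∈ range (k + 1), (-1) ^ m * k.choose m * poch (-y) m / poch x m := by
  rw [← sub_neg_eq_add, poch_sub_eq_sum, sum_div]
  refine sum_congr rfl fun m hm => ?_
  have hsplit : poch x k = poch x m * poch (x + m) (k - m) := by
    rw [← poch_add, Nat.add_sub_cancel' (Nat.lt_succ_iff.mp (mem_range.mp hm))]
  rw [hsplit] at hx ⊢
  field_simp [left_ne_zero_of_mul hx, right_ne_zero_of_mul hx]

lemma sum_choose_mul_chu_vandermonde {N m : ℕ} (B C : ℂ) (hm : m ≤ N) (hC : poch C N ≠ 0) :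
    ∑ k ∈ range (N + 1),
        poch (-N) k * poch B k * ((-1) ^ m * k.choose m * poch (1 - C - k) m) /
          (k.factorial * poch C k) =
      poch (-N) m * poch B m / m.factorial * (poch (C - B - m) (N - m) / poch C (N - m)) := by
  rw [show N + 1 = m + (N - m + 1) by omega, sum_range_add, sum_eq_zero, zero_add, sub_sub,
    ← chu_vandermonde (N - m) (B + m) C (poch_ne_zero_of_le hC (Nat.sub_le N m)), mul_sum]
  · refine sum_congr rfl fun i hi => ?_
    have hiN : m + i ≤ N := by have := mem_range.mp hi; omega
    have hC' : poch C i * poch (C + i) m ≠ 0 := by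
      rw [← poch_add, add_comm]; exact poch_ne_zero_of_le hC hiN
    have hfac : ((m + i).choose m : ℂ) * m.factorial * i.factorial = (m + i).factorial := by
      rw [Nat.choose_symm_add]; exact_mod_cast Nat.add_choose_mul_factorial_mul_factorial m i
    rw [poch_add (-N), poch_add B, add_comm m i, poch_add C, add_comm i m, ← hfac,
      show 1 - C - ((m + i : ℕ) : ℂ) = -(C + i) - m + 1 by push_cast; ring,
      poch_neg_sub_add_one,
      show -(N : ℂ) + m = -((N - m : ℕ) : ℂ) by push_cast [Nat.cast_sub hm]; ring]
    have hchoose : ((m + i).choose m : ℂ) ≠ 0 :=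
      Nat.cast_ne_zero.mpr (Nat.choose_pos (Nat.le_add_right m i)).ne'
    field_simp [left_ne_zero_of_mul hC', right_ne_zero_of_mul hC', m.factorial_ne_zero,
      i.factorial_ne_zero, hchoose]
    rw [← pow_mul', pow_mul, neg_one_sq, one_pow, mul_one]
  · intro k hk
    simp [Nat.choose_eq_zero_of_lt (mem_range.mp hk)]

lemma hypergeometric_term_eq_sum {N k : ℕ} (z a b c : ℂ) (hk : k ≤ N) (ha : poch a k ≠ 0)
    (hac : poch (1 + a - c) k ≠ 0) (hc : poch c k ≠ 0) :
    poch z k * poch (a / 2) k * poch ((a + 1) / 2) k * poch b k /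
        (k.factorial * poch a k * poch (1 + a - c) k * poch c k) * 4 ^ k =
      ∑ m ∈ range (N + 1),
        poch z k * poch b k * ((-1) ^ m * k.choose m * poch (1 - c - k) m) /
          (k.factorial * poch c k) / poch (1 + a - c) m := by
  have hdup : poch (a / 2) k * poch ((a + 1) / 2) k * 4 ^ k = poch a k * poch (a + k) k := by
    rw [poch_duplication, two_mul, poch_add]
  have hvan := poch_add_div_poch (1 + a - c) (c + k - 1) k hac
  rw [show 1 + a - c + (c + k - 1) = a + k by ring, show -(c + k - 1) = 1 - c - k by ring,
    sum_subset (range_subset_range.mpr (Nat.succ_le_succ hk)) fun m _ hm => by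
      simp [Nat.choose_eq_zero_of_lt (not_lt.mp (mt mem_range.mpr hm))]] at hvan
  calc _ = poch z k * poch b k / (k.factorial * poch c k) *
        (poch (a + k) k / poch (1 + a - c) k) := by
        field_simp
        linear_combination poch z k * poch b k / k.factorial * hdup
    _ = _ := by
        rw [hvan, mul_sum]
        refine sum_congr rfl fun m _ => ?_
        ring

lemma poch_tsub_mul_poch_one_sub_sub (c : ℂ) {n m : ℕ} (hm : m ≤ n) :
    poch c (n - m) * poch (1 - c - n) m = (-1) ^ m * poch c n := by
  rw [show 1 - c - n = -(c + (n - m : ℕ)) - m + 1 by push_cast [Nat.cast_sub hm]; ring,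
    poch_neg_sub_add_one, mul_left_comm, ← poch_add, Nat.sub_add_cancel hm]

lemma poch_sub_mul_poch_one_sub_sub (d : ℂ) {n m : ℕ} (hm : m ≤ n) :
    poch (d - m) (n - m) * poch (1 - d - n) (2 * m) = (-1) ^ m * poch (1 - d) m * poch d n := by
  rw [show 1 - d - n = -(d - m + (n - m : ℕ)) - (2 * m : ℕ) + 1 by
      push_cast [Nat.cast_sub hm]; ring,
    poch_neg_sub_add_one, pow_mul, neg_one_sq, one_pow, one_mul, ← poch_add,
    show n - m + 2 * m = m + n by omega, poch_add, sub_add_cancel,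
    show 1 - d = -(d - m) - m + 1 by ring, poch_neg_sub_add_one, ← mul_assoc, ← mul_pow]
  simp

lemma poch_sub_natCast_div_poch_tsub (b c : ℂ) {n m : ℕ} (hm : m ≤ n) (hc : poch c n ≠ 0)
    (hbc : poch (1 + b - c - n) (2 * m) ≠ 0) :
    poch (c - b - m) (n - m) / poch c (n - m) =
      poch (c - b) n / poch c n *
        (poch (1 - c - n) m * poch (1 + b - c) m /
          (poch ((1 + b - c - n) / 2) m * poch ((2 + b - c - n) / 2) m) * (1 / 4) ^ m) := by
  have hdup := poch_duplication (1 + b - c - n) m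
  rw [show (1 + b - c - n + 1) / 2 = (2 + b - c - n) / 2 by ring] at hdup
  have hc' : poch c (n - m) ≠ 0 := poch_ne_zero_of_le hc (Nat.sub_le n m)
  have h1 := poch_tsub_mul_poch_one_sub_sub c hm
  have h2 := poch_sub_mul_poch_one_sub_sub (c - b) hm
  rw [show 1 - (c - b) - n = 1 + b - c - n by ring, show 1 - (c - b) = 1 + b - c by ring] at h2
  rw [← hdup] at hbc h2
  have hhalf := left_ne_zero_of_mul hbc
  rw [one_div_pow]
  field_simp [left_ne_zero_of_mul hhalf, right_ne_zero_of_mul hhalf]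
  linear_combination poch c n * h2 - poch (c - b) n * poch (1 + b - c) m * h1

theorem stmt_1 (n : ℕ) (a b c : ℂ)
    (ha : poch a n ≠ 0) (hac : poch (1 + a - c) n ≠ 0) (hc : poch c n ≠ 0)
    (hbc : poch (1 + b - c - (n : ℂ)) (2 * n) ≠ 0) :
    ∑ k ∈ range (n + 1),
      (poch (-(n : ℂ)) k * poch (a / 2) k * poch ((a + 1) / 2) k * poch b k) /
        ((Nat.factorial k : ℂ) * poch a k * poch (1 + a - c) k * poch c k) * (4 : ℂ) ^ k
    = poch (c - b) n / poch c n *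
      ∑ k ∈ range (n + 1),
        (poch (-(n : ℂ)) k * poch (1 - c - (n : ℂ)) k * poch b k * poch (1 + b - c) k) /
          ((Nat.factorial k : ℂ) * poch (1 + a - c) k * poch ((1 + b - c - (n : ℂ)) / 2) k *
            poch ((2 + b - c - (n : ℂ)) / 2) k) * (1 / 4 : ℂ) ^ k := by
  rw [sum_congr rfl fun k hk =>
      have hkn : k ≤ n := Nat.lt_succ_iff.mp (mem_range.mp hk)
      hypergeometric_term_eq_sum (N := n) _ a b c hkn (poch_ne_zero_of_le ha hkn)
        (poch_ne_zero_of_le hac hkn) (poch_ne_zero_of_le hc hkn),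
    sum_comm, mul_sum]
  refine sum_congr rfl fun m hm => ?_
  have hmn : m ≤ n := Nat.lt_succ_iff.mp (mem_range.mp hm)
  rw [← sum_div, sum_choose_mul_chu_vandermonde b c hmn hc,
    poch_sub_natCast_div_poch_tsub b c hmn hc (poch_ne_zero_of_le hbc (by omega))]
  ring
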